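/- arXiv:0712.2272 — 4 statements merged into one kernel-verified Lean document; each statement's English description precedes it below -/
import Mathlib

section
/- For the Benenti system with equations of motion m·ẍ₁ = λ·ẏ₂, m·ÿ₁ = -λ·ẋ₂, m·ẍ₂ = -λ·ẏ₁, m·ÿ₂ = λ·ẋ₁, the mixed conservation law ẋ₁·ẍ₁ - ẏ₂·ÿ₂ = 0 holds along any solution, corresponding to the generalized nonholonomic symmetry with coefficients (α,β,γ,δ) = (1,0,0,-1). -/
/-- **Benenti system, mixed conservation law.**
Two point masses of mass `m > 0` in the plane, with nonholonomic equations of motion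
`m·ẍ₁ = λ·ẏ₂`, `m·ÿ₁ = -λ·ẋ₂`, `m·ẍ₂ = -λ·ẏ₁`, `m·ÿ₂ = λ·ẋ₁` and constraint
`ẋ₁·ẏ₂ - ẋ₂·ẏ₁ = 0`.  Along any solution the mixed conservation law `ẋ₁·ẍ₁ - ẏ₂·ÿ₂ = 0` holds,
corresponding to the generalized nonholonomic symmetry `(α,β,γ,δ) = (1,0,0,-1)`. -/
theorem benenti_mixed_conservation
    (m : ℝ) (hm : 0 < m) (x1 y1 x2 y2 lam : ℝ → ℝ)
    (hx1 : ContDiff ℝ 2 x1) (hy1 : ContDiff ℝ 2 y1)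
    (hx2 : ContDiff ℝ 2 x2) (hy2 : ContDiff ℝ 2 y2)
    (heq1 : ∀ t, m * deriv (deriv x1) t = lam t * deriv y2 t)
    (heq2 : ∀ t, m * deriv (deriv y1) t = -(lam t) * deriv x2 t)
    (heq3 : ∀ t, m * deriv (deriv x2) t = -(lam t) * deriv y1 t)
    (heq4 : ∀ t, m * deriv (deriv y2) t = lam t * deriv x1 t)
    (hcon : ∀ t, deriv x1 t * deriv y2 t - deriv x2 t * deriv y1 t = 0) :
    ∀ t, deriv x1 t * deriv (deriv x1) t - deriv y2 t * deriv (deriv y2) t = 0 := by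
  intro t
  have h1 := heq1 t
  have h4 := heq4 t
  have hm' := hm.ne'
  have : m * (deriv x1 t * deriv (deriv x1) t - deriv y2 t * deriv (deriv y2) t) = 0 := by
    linear_combination deriv x1 t * h1 - deriv y2 t * h4
  exact (mul_eq_zero.mp this).resolve_left hm'
end

section
/- For the nonholonomic Cosserat rod with sufficiently smooth solution fields satisfying the field equations ρ·x_tt + K·x_ssss = λ, ρ·y_tt + K·y_ssss = μ, α·θ_tt - β·θ_ss = R·(λ·y_s - μ·x_s) together with the rolling constraints x_t + R·θ_t·y_s = 0 and y_t - R·θ_t·x_s = 0, local conservation of energy holds: ∂ℰ/∂t = ∂/∂s [ -K·x_sss·x_t - K·y_sss·y_t + β·θ_s·θ_t + K·(x_ss·x_st + y_ss·y_st) ], where ℰ = (ρ/2)·(x_t² + y_t²) + (α/2)·θ_t² + (K/2)·(x_ss² + y_ss²) + (β/2)·θ_s². -/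
/-- Partial derivative with respect to time `t` (second argument). -/
noncomputable def pt (f : ℝ → ℝ → ℝ) : ℝ → ℝ → ℝ := fun s t => deriv (fun τ => f s τ) t

/-- Partial derivative with respect to space `s` (first argument). -/
noncomputable def ps (f : ℝ → ℝ → ℝ) : ℝ → ℝ → ℝ := fun s t => deriv (fun σ => f σ t) s

/-- Energy density of the Cosserat rod:
`ℰ = (ρ/2)·(x_t² + y_t²) + (α/2)·θ_t² + (K/2)·(x_ss² + y_ss²) + (β/2)·θ_s²`. -/
noncomputable def energyDensity (ρ α β K : ℝ) (x y θ : ℝ → ℝ → ℝ) : ℝ → ℝ → ℝ :=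
  fun s t =>
    ρ / 2 * ((pt x s t) ^ 2 + (pt y s t) ^ 2) + α / 2 * (pt θ s t) ^ 2
      + K / 2 * ((ps (ps x) s t) ^ 2 + (ps (ps y) s t) ^ 2) + β / 2 * (ps θ s t) ^ 2

/-- Energy flux of the Cosserat rod:
`-K·x_sss·x_t - K·y_sss·y_t + β·θ_s·θ_t + K·(x_ss·x_st + y_ss·y_st)`. -/
noncomputable def energyFlux (β K : ℝ) (x y θ : ℝ → ℝ → ℝ) : ℝ → ℝ → ℝ :=
  fun s t =>
    -K * ps (ps (ps x)) s t * pt x s t - K * ps (ps (ps y)) s t * pt y s t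
      + β * ps θ s t * pt θ s t
      + K * (ps (ps x) s t * pt (ps x) s t + ps (ps y) s t * pt (ps y) s t)

open Function

variable {f : ℝ → ℝ → ℝ}

lemma hasDerivAt_T (hf : ContDiff ℝ (⊤ : ℕ∞) (uncurry f)) (s t : ℝ) :
    HasDerivAt (fun τ => f s τ) (fderiv ℝ (uncurry f) (s, t) (0, 1)) t := by
  have h := (hf.differentiable (by simp) (s, t)).hasFDerivAt
  have hγ : HasDerivAt (fun τ : ℝ => ((s : ℝ), τ)) ((0 : ℝ), (1 : ℝ)) t :=
    (hasDerivAt_const t s).prodMk (hasDerivAt_id t)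
  exact h.comp_hasDerivAt t hγ

lemma hasDerivAt_S (hf : ContDiff ℝ (⊤ : ℕ∞) (uncurry f)) (s t : ℝ) :
    HasDerivAt (fun σ => f σ t) (fderiv ℝ (uncurry f) (s, t) (1, 0)) s := by
  have h := (hf.differentiable (by simp) (s, t)).hasFDerivAt
  have hγ : HasDerivAt (fun σ : ℝ => (σ, t)) ((1 : ℝ), (0 : ℝ)) s :=
    (hasDerivAt_id s).prodMk (hasDerivAt_const s t)
  exact h.comp_hasDerivAt s hγ

lemma pt_eq (hf : ContDiff ℝ (⊤ : ℕ∞) (uncurry f)) (s t : ℝ) :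
    pt f s t = fderiv ℝ (uncurry f) (s, t) (0, 1) := (hasDerivAt_T hf s t).deriv

lemma ps_eq (hf : ContDiff ℝ (⊤ : ℕ∞) (uncurry f)) (s t : ℝ) :
    ps f s t = fderiv ℝ (uncurry f) (s, t) (1, 0) := (hasDerivAt_S hf s t).deriv

lemma hdT (hf : ContDiff ℝ (⊤ : ℕ∞) (uncurry f)) (s t : ℝ) :
    HasDerivAt (fun τ => f s τ) (pt f s t) t := by
  rw [pt_eq hf s t]; exact hasDerivAt_T hf s t

lemma hdS (hf : ContDiff ℝ (⊤ : ℕ∞) (uncurry f)) (s t : ℝ) :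
    HasDerivAt (fun σ => f σ t) (ps f s t) s := by
  rw [ps_eq hf s t]; exact hasDerivAt_S hf s t

lemma contDiff_pt (hf : ContDiff ℝ (⊤ : ℕ∞) (uncurry f)) : ContDiff ℝ (⊤ : ℕ∞) (uncurry (pt f)) := by
  have h : uncurry (pt f) = fun p : ℝ × ℝ => fderiv ℝ (uncurry f) p (0, 1) := by
    funext p
    have := pt_eq hf p.1 p.2
    simpa [uncurry] using this
  rw [h]
  exact (hf.fderiv_right (by simp)).clm_apply contDiff_const

lemma contDiff_ps (hf : ContDiff ℝ (⊤ : ℕ∞) (uncurry f)) : ContDiff ℝ (⊤ : ℕ∞) (uncurry (ps f)) := by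
  have h : uncurry (ps f) = fun p : ℝ × ℝ => fderiv ℝ (uncurry f) p (1, 0) := by
    funext p
    have := ps_eq hf p.1 p.2
    simpa [uncurry] using this
  rw [h]
  exact (hf.fderiv_right (by simp)).clm_apply contDiff_const

lemma pt_ps_comm (hf : ContDiff ℝ (⊤ : ℕ∞) (uncurry f)) (s t : ℝ) :
    pt (ps f) s t = ps (pt f) s t := by
  set F := uncurry f with hF
  have hF' : ∀ p, HasFDerivAt F (fderiv ℝ F p) p := fun p =>
    (hf.differentiable (by simp) p).hasFDerivAt
  have hF'd : DifferentiableAt ℝ (fderiv ℝ F) (s, t) :=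
    ((hf.fderiv_right (m := 1) (WithTop.coe_le_coe.mpr le_top)).differentiable (by simp)) (s, t)
  have hsymm := second_derivative_symmetric hF' hF'd.hasFDerivAt
  have key : ∀ v : ℝ × ℝ,
      fderiv ℝ (fun p : ℝ × ℝ => fderiv ℝ F p v) (s, t)
        = (fderiv ℝ (fderiv ℝ F) (s, t)).flip v := by
    intro v
    rw [fderiv_clm_apply hF'd (differentiableAt_const v)]
    simp
  have e1 : pt (ps f) s t = fderiv ℝ (fderiv ℝ F) (s, t) (0, 1) (1, 0) := by
    rw [pt_eq (contDiff_ps hf) s t]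
    have hu : uncurry (ps f) = fun p : ℝ × ℝ => fderiv ℝ F p (1, 0) := by
      funext p; simpa [uncurry] using ps_eq hf p.1 p.2
    rw [hu, key (1, 0)]
    simp
  have e2 : ps (pt f) s t = fderiv ℝ (fderiv ℝ F) (s, t) (1, 0) (0, 1) := by
    rw [ps_eq (contDiff_pt hf) s t]
    have hu : uncurry (pt f) = fun p : ℝ × ℝ => fderiv ℝ F p (0, 1) := by
      funext p; simpa [uncurry] using pt_eq hf p.1 p.2
    rw [hu, key (0, 1)]
    simp
  rw [e1, e2, hsymm]


/-- **Nonholonomic Cosserat rod: local conservation of energy.**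
For smooth fields satisfying the field equations
`ρ·x_tt + K·x_ssss = λ`, `ρ·y_tt + K·y_ssss = μ`,
`α·θ_tt - β·θ_ss = R·(λ·y_s - μ·x_s)` together with the rolling constraints
`x_t + R·θ_t·y_s = 0` and `y_t - R·θ_t·x_s = 0`, one has `∂ℰ/∂t = ∂(flux)/∂s`. -/
theorem cosserat_local_energy_conservation
    (ρ α β K R : ℝ) (x y θ lam mu : ℝ → ℝ → ℝ)
    (hx : ContDiff ℝ (⊤ : ℕ∞) (Function.uncurry x))
    (hy : ContDiff ℝ (⊤ : ℕ∞) (Function.uncurry y))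
    (hθ : ContDiff ℝ (⊤ : ℕ∞) (Function.uncurry θ))
    (h1 : ∀ s t, ρ * pt (pt x) s t + K * ps (ps (ps (ps x))) s t = lam s t)
    (h2 : ∀ s t, ρ * pt (pt y) s t + K * ps (ps (ps (ps y))) s t = mu s t)
    (h3 : ∀ s t, α * pt (pt θ) s t - β * ps (ps θ) s t
        = R * (lam s t * ps y s t - mu s t * ps x s t))
    (hc1 : ∀ s t, pt x s t + R * pt θ s t * ps y s t = 0)
    (hc2 : ∀ s t, pt y s t - R * pt θ s t * ps x s t = 0) :
    ∀ s t, pt (energyDensity ρ α β K x y θ) s t = ps (energyFlux β K x y θ) s t := by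
  intro s t
  -- smoothness of all the derived fields
  have hxs := contDiff_ps hx
  have hxss := contDiff_ps hxs
  have hxsss := contDiff_ps hxss
  have hxt := contDiff_pt hx
  have hxst := contDiff_pt hxs
  have hys := contDiff_ps hy
  have hyss := contDiff_ps hys
  have hysss := contDiff_ps hyss
  have hyt := contDiff_pt hy
  have hyst := contDiff_pt hys
  have hθs := contDiff_ps hθ
  have hθt := contDiff_pt hθ
  -- time derivative of the energy density
  have HL : HasDerivAt (fun τ => energyDensity ρ α β K x y θ s τ)
      (ρ / 2 * (2 * pt x s t * pt (pt x) s t + 2 * pt y s t * pt (pt y) s t)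
        + α / 2 * (2 * pt θ s t * pt (pt θ) s t)
        + K / 2 * (2 * ps (ps x) s t * pt (ps (ps x)) s t
            + 2 * ps (ps y) s t * pt (ps (ps y)) s t)
        + β / 2 * (2 * ps θ s t * pt (ps θ) s t)) t := by
    have Hxt := hdT hxt s t
    have Hyt := hdT hyt s t
    have Hθt := hdT hθt s t
    have Hxss := hdT hxss s t
    have Hyss := hdT hyss s t
    have Hθs := hdT hθs s t
    have big := (((((Hxt.pow 2).add (Hyt.pow 2)).const_mul (ρ / 2)).add
        ((Hθt.pow 2).const_mul (α / 2))).add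
        ((((Hxss.pow 2).add (Hyss.pow 2)).const_mul (K / 2)))).add
        ((Hθs.pow 2).const_mul (β / 2))
    exact big.congr_deriv (by norm_num)
  -- space derivative of the energy flux
  have HR : HasDerivAt (fun σ => energyFlux β K x y θ σ t)
      (-K * (ps (ps (ps (ps x))) s t * pt x s t + ps (ps (ps x)) s t * ps (pt x) s t)
        - K * (ps (ps (ps (ps y))) s t * pt y s t + ps (ps (ps y)) s t * ps (pt y) s t)
        + β * (ps (ps θ) s t * pt θ s t + ps θ s t * ps (pt θ) s t)
        + K * ((ps (ps (ps x)) s t * pt (ps x) s t + ps (ps x) s t * ps (pt (ps x)) s t)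
          + (ps (ps (ps y)) s t * pt (ps y) s t + ps (ps y) s t * ps (pt (ps y)) s t))) s := by
    have Hxsss := hdS hxsss s t
    have Hysss := hdS hysss s t
    have Hxt := hdS hxt s t
    have Hyt := hdS hyt s t
    have Hθs := hdS hθs s t
    have Hθt := hdS hθt s t
    have Hxss := hdS hxss s t
    have Hyss := hdS hyss s t
    have Hxst := hdS hxst s t
    have Hyst := hdS hyst s t
    have big := ((((Hxsss.const_mul (-K)).mul Hxt).sub
        ((Hysss.const_mul K).mul Hyt)).add
        ((Hθs.const_mul β).mul Hθt)).add
        (((Hxss.mul Hxst).add (Hyss.mul Hyst)).const_mul K)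
    exact big.congr_deriv (by ring)
  have e1 : pt (energyDensity ρ α β K x y θ) s t = _ := HL.deriv
  have e2 : ps (energyFlux β K x y θ) s t = _ := HR.deriv
  rw [e1, e2, ← pt_ps_comm hx s t, ← pt_ps_comm hy s t, ← pt_ps_comm hθ s t,
    ← pt_ps_comm hxs s t, ← pt_ps_comm hys s t]
  linear_combination (pt x s t) * h1 s t + (pt y s t) * h2 s t + (pt θ s t) * h3 s t
    + (lam s t) * hc1 s t + (mu s t) * hc2 s t
end

section
/- Let ξ̄ be a nonholonomic symmetry, i.e., a section of 𝔤^F such that the associated vector field ξ̃_Y is π-projectable, where 𝔤^F(y) consists of all ξ ∈ 𝔤 with j¹ξ_Y(γ) ⌟ Φ = 0 for all γ ∈ 𝒞 ∩ π_{1,0}^{-1}(y) and all Φ ∈ F. Then j¹ξ̃_Y(γ) ⌟ Φ(γ) = 0 for all γ ∈ 𝒞 and all Φ ∈ F; consequently j¹ξ̃_Y is admissible with respect to every section φ of π whose prolongation lies in 𝒞. -/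
open scoped BigOperators

/-- Coordinate indices of `J¹π`. -/
abbrev Idx (n m : ℕ) : Type := Fin (n + 1) ⊕ (Fin m ⊕ Fin m × Fin (n + 1))

abbrev Jet1 (n m : ℕ) : Type := Idx n m → ℝ
abbrev Base (n : ℕ) : Type := Fin (n + 1) → ℝ

/-- Coordinates of the total space `Y`. -/
abbrev YC (n m : ℕ) : Type := (Fin (n + 1) ⊕ Fin m) → ℝ

/-- Projection `π_{1,0} : J¹π → Y` in coordinates. -/
def pr10 (n m : ℕ) (p : Jet1 n m) : YC n m :=
  fun i => p (Sum.elim Sum.inl (fun a => Sum.inr (Sum.inl a)) i)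

/-- First jet prolongation `j¹φ` of a section `φ`, in coordinates. -/
noncomputable def jetProlong (n m : ℕ) (φ : Base n → Fin m → ℝ) (x : Base n) : Jet1 n m :=
  Sum.elim x
    (Sum.elim (fun a => φ x a)
      (fun aμ : Fin m × Fin (n + 1) =>
        fderiv ℝ (fun x' => φ x' aμ.1) x (Pi.single aμ.2 1)))

/-- Total derivative `d/dx^ν` on functions of `(x,y)`, evaluated at a jet `p`. -/
noncomputable def totalDY (n m : ℕ) (ν : Fin (n + 1)) (g : YC n m → ℝ) (p : Jet1 n m) : ℝ :=
  fderiv ℝ g (pr10 n m p) (Pi.single (Sum.inl ν) 1)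
    + ∑ b : Fin m, p (Sum.inr (Sum.inr (b, ν))) *
        fderiv ℝ g (pr10 n m p) (Pi.single (Sum.inr b) 1)

/-- First jet prolongation of a vector field `Z` on `Y`. -/
noncomputable def prolongY (n m : ℕ) (Z : YC n m → YC n m) (p : Jet1 n m) : Jet1 n m :=
  Sum.elim (fun μ => Z (pr10 n m p) (Sum.inl μ))
    (Sum.elim (fun a => Z (pr10 n m p) (Sum.inr a))
      (fun aν : Fin m × Fin (n + 1) =>
        totalDY n m aν.2 (fun y => Z y (Sum.inr aν.1)) p
          - ∑ μ : Fin (n + 1), p (Sum.inr (Sum.inr (aν.1, μ))) *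
              totalDY n m aν.2 (fun y => Z y (Sum.inl μ)) p))

/-- **Nonholonomic symmetries give admissible prolonged vector fields.**
Let `ξ̄` be a nonholonomic symmetry: its associated vector field
`ξ̃_Y(y) = [ξ̄(y)]_Y(y)` is `π`-projectable, and each frozen fundamental field
`[ξ̄(y)]_Y` has prolongation annihilating every reaction force `Φ ∈ F` at every
point of `𝒞` over `y`.  If moreover every `Φ ∈ F` is semi-basic over `Y` (its
contraction is unchanged by adding a `π_{1,0}`-vertical vector in the first slot),
then `j¹ξ̃_Y ⌟ Φ = 0` on all of `𝒞`, and consequently `j¹ξ̃_Y` is admissible with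
respect to every section `φ` whose prolongation lies in `𝒞`. -/
theorem nonholonomic_symmetry_admissible (n m d : ℕ)
    (act : (Fin d → ℝ) → YC n m → YC n m)
    (ξbar : YC n m → Fin d → ℝ)
    (ξtY : YC n m → YC n m) (hξt : ∀ y, ξtY y = act (ξbar y) y)
    (hst : ContDiff ℝ (⊤ : ℕ∞) ξtY)
    (hsfro : ∀ y : YC n m, ContDiff ℝ (⊤ : ℕ∞) (fun y' => act (ξbar y) y'))
    (hproj : ∃ ξX : Base n → Base n, ∀ (y : YC n m) (μ : Fin (n + 1)),
      ξtY y (Sum.inl μ) = ξX (fun ν => y (Sum.inl ν)) μ)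
    (C : Set (Jet1 n m))
    (F : Set (Jet1 n m → (Fin (n + 1) → Jet1 n m) → ℝ))
    (hsb : ∀ Φ ∈ F, ∀ (p : Jet1 n m) (u v : Jet1 n m) (vs : Fin n → Jet1 n m),
      (∀ μ, v (Sum.inl μ) = 0) → (∀ a, v (Sum.inr (Sum.inl a)) = 0) →
        Φ p (Fin.cons (u + v) vs) = Φ p (Fin.cons u vs))
    (hsym : ∀ (γ : Jet1 n m), γ ∈ C → ∀ Φ ∈ F, ∀ vs : Fin n → Jet1 n m,
      Φ γ (Fin.cons (prolongY n m (fun y' => act (ξbar (pr10 n m γ)) y') γ) vs) = 0) :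
    (∀ (γ : Jet1 n m), γ ∈ C → ∀ Φ ∈ F, ∀ vs : Fin n → Jet1 n m,
      Φ γ (Fin.cons (prolongY n m ξtY γ) vs) = 0) ∧
    (∀ φ : Base n → Fin m → ℝ, ContDiff ℝ (⊤ : ℕ∞) φ →
      (∀ x, jetProlong n m φ x ∈ C) →
      ∀ Φ ∈ F, ∀ (x : Base n) (vs : Fin n → Base n),
        Φ (jetProlong n m φ x)
          (Fin.cons (prolongY n m ξtY (jetProlong n m φ x))
            (fun k => fderiv ℝ (jetProlong n m φ) x (vs k))) = 0) := by
  have main : ∀ (γ : Jet1 n m), γ ∈ C → ∀ Φ ∈ F, ∀ vs : Fin n → Jet1 n m,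
      Φ γ (Fin.cons (prolongY n m ξtY γ) vs) = 0 := by
    intro γ hγ Φ hΦ vs
    set u := prolongY n m (fun y' => act (ξbar (pr10 n m γ)) y') γ with hu
    have key : prolongY n m ξtY γ = u + (prolongY n m ξtY γ - u) := by
      simp
    rw [key, hsb Φ hΦ γ u (prolongY n m ξtY γ - u) vs ?_ ?_]
    · exact hsym γ hγ Φ hΦ vs
    · intro μ; simp [hu, Pi.sub_apply, prolongY, hξt]
    · intro a; simp [hu, Pi.sub_apply, prolongY, hξt]
  exact ⟨main, fun φ hφ hC Φ hΦ x vs => main _ (hC x) Φ hΦ _⟩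
end

section
/- If φ is a solution of the nonholonomic field equations (j¹φ)*(W ⌟ Ω_L) = 0 for all admissible W, and ξ̄ is a nonholonomic symmetry with associated projectable vector field ξ̃_Y, then the component J^{n.h.}_{ξ̄} = j¹ξ̃_Y ⌟ Θ_L of the nonholonomic momentum map satisfies the momentum equation (j¹φ)*(d J^{n.h.}_{ξ̄}) = (j¹φ)*(𝓛_{j¹ξ̃_Y}(L·η)). -/
open scoped BigOperators

/-- The contact one-form `θ^a = dy^a - y^a_μ dx^μ` at `p`, evaluated on a vector. -/
def thetaVec (n m : ℕ) (a : Fin m) (p : Jet1 n m) (v : Jet1 n m) : ℝ :=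
  v (Sum.inr (Sum.inl a)) - ∑ μ : Fin (n + 1), p (Sum.inr (Sum.inr (a, μ))) * v (Sum.inl μ)

/-- The `(n+1)`-form `θ^a ∧ d^n x_μ` at `p`. -/
noncomputable def thetaWedge (n m : ℕ) (a : Fin m) (μ : Fin (n + 1)) (p : Jet1 n m)
    (vs : Fin (n + 1) → Jet1 n m) : ℝ :=
  (-1 : ℝ) ^ (μ : ℕ) *
    Matrix.det (Matrix.of fun i j =>
      (Fin.cons (thetaVec n m a p)
        (fun k => fun v => v (Sum.inl (μ.succAbove k))) : Fin (n + 1) → Jet1 n m → ℝ) i (vs j))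

/-- The volume form `η = d^{n+1}x`, evaluated on `n+1` vectors. -/
noncomputable def volForm (n m : ℕ) (vs : Fin (n + 1) → Jet1 n m) : ℝ :=
  Matrix.det (Matrix.of fun i j => vs j (Sum.inl i))

/-- The Poincaré–Cartan `(n+1)`-form
`Θ_L = (∂L/∂y^a_μ) θ^a ∧ d^n x_μ + L d^{n+1}x`. -/
noncomputable def pcForm (n m : ℕ) (L : Jet1 n m → ℝ) (p : Jet1 n m)
    (vs : Fin (n + 1) → Jet1 n m) : ℝ :=
  (∑ a : Fin m, ∑ μ : Fin (n + 1),
      fderiv ℝ L p (Pi.single (Sum.inr (Sum.inr (a, μ))) 1) * thetaWedge n m a μ p vs)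
    + L p * volForm n m vs

/-- Exterior derivative of a `k`-form (given as a function of a point and `k` constant
vectors). -/
noncomputable def dform (n m k : ℕ) (ω : Jet1 n m → (Fin k → Jet1 n m) → ℝ)
    (p : Jet1 n m) (vs : Fin (k + 1) → Jet1 n m) : ℝ :=
  ∑ i : Fin (k + 1), (-1 : ℝ) ^ (i : ℕ) *
    fderiv ℝ (fun q => ω q (fun j => vs (i.succAbove j))) p (vs i)

/-- The Poincaré–Cartan `(n+2)`-form `Ω_L = -dΘ_L`. -/
noncomputable def pcOmega (n m : ℕ) (L : Jet1 n m → ℝ) (p : Jet1 n m)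
    (vs : Fin (n + 2) → Jet1 n m) : ℝ :=
  -(dform n m (n + 1) (pcForm n m L) p vs)

/-- The component `J^{n.h.}_{ξ̄} = j¹ξ̃_Y ⌟ Θ_L` of the nonholonomic momentum map
associated with the vector field `Z = ξ̃_Y`, an `n`-form. -/
noncomputable def momentumMap (n m : ℕ) (L : Jet1 n m → ℝ) (Z : YC n m → YC n m)
    (p : Jet1 n m) (vs : Fin n → Jet1 n m) : ℝ :=
  pcForm n m L p (Fin.cons (prolongY n m Z p) vs)

/-- Lie derivative of an `(n+1)`-form along a vector field `X` on `J¹π`. -/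
noncomputable def lieForm (n m : ℕ) (X : Jet1 n m → Jet1 n m)
    (ω : Jet1 n m → (Fin (n + 1) → Jet1 n m) → ℝ) (p : Jet1 n m)
    (vs : Fin (n + 1) → Jet1 n m) : ℝ :=
  fderiv ℝ (fun q => ω q vs) p (X p)
    + ∑ k : Fin (n + 1), ω p (Function.update vs k (fderiv ℝ X p (vs k)))

/-- The Lagrangian `(n+1)`-form `L·η`. -/
noncomputable def lagForm (n m : ℕ) (L : Jet1 n m → ℝ) (p : Jet1 n m)
    (vs : Fin (n + 1) → Jet1 n m) : ℝ :=
  L p * volForm n m vs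



section helpers

/-- Evaluate a continuous linear functional on `ι → ℝ` via the standard basis. -/
lemma clm_eval_sum {ι : Type*} [Fintype ι] [DecidableEq ι]
    (T : (ι → ℝ) →L[ℝ] ℝ) (v : ι → ℝ) :
    T v = ∑ i, v i * T (Pi.single i 1) := by
  have h1 : ∀ i, T (Pi.single i (v i)) = v i * T (Pi.single i 1) := by
    intro i
    rw [← smul_eq_mul, ← T.map_smul]
    congr 1
    funext j
    by_cases h : j = i <;> simp [Pi.single_apply, h]
  nth_rewrite 1 [← Finset.univ_sum_single v]
  rw [map_sum]
  exact Finset.sum_congr rfl fun i _ => h1 i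

lemma sum_det_updateRow_single {N : ℕ} (A : Matrix (Fin (N+1)) (Fin (N+1)) ℝ)
    (t : Fin (N+1) → ℝ) :
    ∑ r, (A.updateRow r (Pi.single 0 (t r))).det = (A.updateCol 0 t).det := by
  have sub_eq : ∀ (r : Fin (N+1)) (s : Fin (N+1) → ℝ),
      ((A.updateRow r s).submatrix r.succAbove ((0 : Fin (N+1)).succAbove))
        = A.submatrix r.succAbove Fin.succ := by
    intro r s
    ext i j
    rw [Matrix.submatrix_apply, Matrix.updateRow_ne (Fin.succAbove_ne r i),
      Fin.succAbove_zero, Matrix.submatrix_apply]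
  have lhs_eq : ∀ r : Fin (N+1), (A.updateRow r (Pi.single 0 (t r))).det
      = (-1) ^ (r : ℕ) * t r * (A.submatrix r.succAbove Fin.succ).det := by
    intro r
    rw [Matrix.det_succ_row _ r]
    rw [Finset.sum_eq_single (0 : Fin (N+1))]
    · rw [Matrix.updateRow_self, sub_eq]
      simp
    · intro j _ hj
      rw [Matrix.updateRow_self]
      rw [Pi.single_eq_of_ne hj]
      ring
    · intro h
      exact absurd (Finset.mem_univ _) h
  rw [Matrix.det_succ_column_zero]
  refine Finset.sum_congr rfl fun r _ => ?_
  rw [lhs_eq r, Matrix.updateCol_self]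
  have hsub : (A.updateCol 0 t).submatrix r.succAbove Fin.succ
      = A.submatrix r.succAbove Fin.succ := by
    ext i j
    rw [Matrix.submatrix_apply, Matrix.updateCol_ne (Fin.succ_ne_zero j),
      Matrix.submatrix_apply]
  rw [hsub]

lemma det_update_cycle {N : ℕ} {α : Type*} (R : Fin (N+1) → α → ℝ)
    (ws : Fin (N+1) → α) (u : α) (i : Fin (N+1)) :
    Matrix.det (Matrix.of fun r j => R r (Function.update ws i u j))
      = (-1) ^ (i : ℕ) *
        Matrix.det (Matrix.of fun r j =>
          R r ((Fin.cons u (fun k => ws (i.succAbove k)) : Fin (N+1) → α) j)) := by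
  set c : Fin (N+1) → α := Fin.cons u (fun k => ws (i.succAbove k)) with hc
  have key : ∀ t : Fin (N+1), c t = Function.update ws i u (i.cycleRange.symm t) := by
    intro t
    refine Fin.cases ?_ (fun k => ?_) t
    · rw [hc, Fin.cycleRange_symm_zero, Fin.cons_zero, Function.update_self]
    · rw [hc, Fin.cycleRange_symm_succ, Fin.cons_succ,
        Function.update_of_ne (Fin.succAbove_ne i k)]
  have hcol : ∀ j, Function.update ws i u j = c (i.cycleRange j) := by
    intro j
    rw [key (i.cycleRange j), Equiv.symm_apply_apply]
  have hM : (Matrix.of fun r j => R r (Function.update ws i u j))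
      = (Matrix.of fun r j => R r (c j)).submatrix id i.cycleRange := by
    ext r j
    rw [Matrix.submatrix_apply, Matrix.of_apply, Matrix.of_apply, hcol j]
    rfl
  rw [hM, Matrix.det_permute', Fin.sign_cycleRange]
  norm_num

/-- The determinant, as a continuous multilinear map in the rows. -/
noncomputable def detCML (N : ℕ) :
    ContinuousMultilinearMap ℝ (fun _ : Fin N => (Fin N → ℝ)) ℝ :=
  MultilinearMap.mkContinuous
    ((Matrix.detRowAlternating : (Fin N → ℝ) [⋀^Fin N]→ₗ[ℝ] ℝ)).toMultilinearMap
    (N.factorial) (by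
      intro M
      show ‖Matrix.det (Matrix.of M)‖ ≤ (N.factorial : ℝ) * ∏ i : Fin N, ‖M i‖
      rw [Real.norm_eq_abs, Matrix.det_apply]
      refine le_trans (Finset.abs_sum_le_sum_abs _ _) ?_
      have h2 : ∀ σ : Equiv.Perm (Fin N),
          |Equiv.Perm.sign σ • ∏ i, Matrix.of M (σ i) i| ≤ ∏ i : Fin N, ‖M i‖ := by
        intro σ
        have he : |Equiv.Perm.sign σ • ∏ i, Matrix.of M (σ i) i|
            = |∏ i, Matrix.of M (σ i) i| := by
          rcases Int.units_eq_one_or (Equiv.Perm.sign σ) with h | h <;> simp [h]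
        rw [he, Finset.abs_prod]
        have hb : ∀ i : Fin N, |Matrix.of M (σ i) i| ≤ ‖M (σ i)‖ := by
          intro i
          simpa [Real.norm_eq_abs] using norm_le_pi_norm (M (σ i)) i
        refine le_trans (Finset.prod_le_prod (fun i _ => abs_nonneg _)
          (fun i _ => hb i)) ?_
        rw [Equiv.prod_comp σ (fun j => ‖M j‖)]
      refine le_trans (Finset.sum_le_sum (fun σ _ => h2 σ)) ?_
      rw [Finset.sum_const]
      simp [Fintype.card_perm, mul_comm])

lemma detCML_apply {N : ℕ} (M : Fin N → Fin N → ℝ) :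
    detCML N M = Matrix.det (Matrix.of M) := rfl

/-- The derivative of a determinant with differentiable entries. -/
noncomputable def detDeriv {E₀ : Type*} [NormedAddCommGroup E₀] [NormedSpace ℝ E₀] {N : ℕ}
    (Ap : Fin N → Fin N → ℝ) (A' : Fin N → E₀ →L[ℝ] (Fin N → ℝ)) : E₀ →L[ℝ] ℝ :=
  ∑ i, ((detCML N).toContinuousLinearMap Ap i).comp (A' i)

lemma detDeriv_apply {E₀ : Type*} [NormedAddCommGroup E₀] [NormedSpace ℝ E₀] {N : ℕ}
    (Ap : Fin N → Fin N → ℝ) (A' : Fin N → E₀ →L[ℝ] (Fin N → ℝ)) (h : E₀) :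
    detDeriv Ap A' h = ∑ i, Matrix.det (Matrix.updateRow (Matrix.of Ap) i (A' i h)) := by
  simp only [detDeriv, ContinuousLinearMap.sum_apply, ContinuousLinearMap.comp_apply,
    ContinuousMultilinearMap.toContinuousLinearMap_apply]
  refine Finset.sum_congr rfl fun i _ => ?_
  rw [detCML_apply]
  congr 1

lemma hasFDerivAt_det {E₀ : Type*} [NormedAddCommGroup E₀] [NormedSpace ℝ E₀] {N : ℕ}
    (A : E₀ → Fin N → Fin N → ℝ) (A' : Fin N → E₀ →L[ℝ] (Fin N → ℝ)) (p : E₀)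
    (h : ∀ i, HasFDerivAt (fun q => A q i) (A' i) p) :
    HasFDerivAt (fun q => Matrix.det (Matrix.of (A q))) (detDeriv (A p) A') p := by
  have h2 := HasFDerivAt.multilinear_comp (detCML N) (g := fun i q => A q i)
    (g' := A') (x := p) h
  exact h2

end helpers

section setting

variable {n m : ℕ}

/-- Coordinate projection, as a continuous linear map. -/
noncomputable def prj (n m : ℕ) (i : Idx n m) : Jet1 n m →L[ℝ] ℝ :=
  ContinuousLinearMap.proj i

lemma prj_apply (i : Idx n m) (q : Jet1 n m) : prj n m i q = q i := rfl

lemma hasFDerivAt_prj (i : Idx n m) (p : Jet1 n m) :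
    HasFDerivAt (fun q : Jet1 n m => q i) (prj n m i) p :=
  (prj n m i).hasFDerivAt

/-- `pr10` as a continuous linear map. -/
noncomputable def pr10L (n m : ℕ) : Jet1 n m →L[ℝ] YC n m :=
  ContinuousLinearMap.pi (fun i =>
    ContinuousLinearMap.proj (Sum.elim Sum.inl (fun a => Sum.inr (Sum.inl a)) i))

lemma pr10_eq_clm : pr10 n m = pr10L n m := rfl

lemma hasFDerivAt_pr10 (p : Jet1 n m) :
    HasFDerivAt (pr10 n m) (pr10L n m) p := by
  rw [pr10_eq_clm]; exact (pr10L n m).hasFDerivAt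

/-- Derivative of `q ↦ θ^a_q(w)` for fixed `w`. -/
noncomputable def dTheta (n m : ℕ) (a : Fin m) (w : Jet1 n m) : Jet1 n m →L[ℝ] ℝ :=
  - ∑ μ : Fin (n+1), w (Sum.inl μ) • prj n m (Sum.inr (Sum.inr (a, μ)))

lemma dTheta_apply (a : Fin m) (w h : Jet1 n m) :
    dTheta n m a w h = -∑ μ : Fin (n+1), h (Sum.inr (Sum.inr (a, μ))) * w (Sum.inl μ) := by
  simp [dTheta, prj, mul_comm]

/-- `θ^a_p` as a continuous linear map in the vector argument. -/
noncomputable def thetaCLM (n m : ℕ) (a : Fin m) (p : Jet1 n m) : Jet1 n m →L[ℝ] ℝ :=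
  prj n m (Sum.inr (Sum.inl a))
    - ∑ μ : Fin (n+1), p (Sum.inr (Sum.inr (a, μ))) • prj n m (Sum.inl μ)

lemma thetaCLM_apply (a : Fin m) (p v : Jet1 n m) :
    thetaCLM n m a p v = thetaVec n m a p v := by
  simp [thetaCLM, thetaVec, prj]

lemma hasFDerivAt_thetaVec (a : Fin m) (w : Jet1 n m) (p : Jet1 n m) :
    HasFDerivAt (fun q => thetaVec n m a q w) (dTheta n m a w) p := by
  have h1 : HasFDerivAt (fun q : Jet1 n m =>
      w (Sum.inr (Sum.inl a)) - ∑ μ : Fin (n+1), q (Sum.inr (Sum.inr (a, μ))) * w (Sum.inl μ))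
      (0 - ∑ μ : Fin (n+1), w (Sum.inl μ) • prj n m (Sum.inr (Sum.inr (a, μ)))) p := by
    refine (hasFDerivAt_const _ _).sub (HasFDerivAt.fun_sum fun μ _ => ?_)
    exact (hasFDerivAt_prj (Sum.inr (Sum.inr (a, μ))) p).mul_const (w (Sum.inl μ))
  have h2 : (0 - ∑ μ : Fin (n+1), w (Sum.inl μ) • prj n m (Sum.inr (Sum.inr (a, μ))))
      = dTheta n m a w := by
    rw [zero_sub]; rfl
  rw [h2] at h1
  exact h1

/-- Derivative of `q ↦ θ^a_q(W q)` along a differentiable vector field `W`. -/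
lemma hasFDerivAt_thetaVec_comp (a : Fin m) (p : Jet1 n m)
    (W : Jet1 n m → Jet1 n m) (W' : Jet1 n m →L[ℝ] Jet1 n m)
    (hW : HasFDerivAt W W' p) :
    HasFDerivAt (fun q => thetaVec n m a q (W q))
      (dTheta n m a (W p) + (thetaCLM n m a p).comp W') p := by
  have h1 : HasFDerivAt (fun q => W q (Sum.inr (Sum.inl a)))
      ((prj n m (Sum.inr (Sum.inl a))).comp W') p :=
    (hasFDerivAt_prj _ (W p)).comp p hW
  have h2 : ∀ μ : Fin (n+1), HasFDerivAt
      (fun q => q (Sum.inr (Sum.inr (a, μ))) * W q (Sum.inl μ))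
      (p (Sum.inr (Sum.inr (a, μ))) • ((prj n m (Sum.inl μ)).comp W')
        + W p (Sum.inl μ) • prj n m (Sum.inr (Sum.inr (a, μ)))) p := by
    intro μ
    exact (hasFDerivAt_prj (Sum.inr (Sum.inr (a, μ))) p).mul
      ((hasFDerivAt_prj (Sum.inl μ) (W p)).comp p hW)
  have h3 := h1.sub (HasFDerivAt.fun_sum (u := Finset.univ) fun μ _ => h2 μ)
  have heq : (prj n m (Sum.inr (Sum.inl a))).comp W'
      - ∑ μ : Fin (n+1), (p (Sum.inr (Sum.inr (a, μ))) • ((prj n m (Sum.inl μ)).comp W')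
        + W p (Sum.inl μ) • prj n m (Sum.inr (Sum.inr (a, μ))))
      = dTheta n m a (W p) + (thetaCLM n m a p).comp W' := by
    ext h
    simp only [ContinuousLinearMap.sub_apply, ContinuousLinearMap.comp_apply,
      ContinuousLinearMap.sum_apply, ContinuousLinearMap.add_apply,
      ContinuousLinearMap.smul_apply, dTheta_apply, thetaCLM_apply, prj_apply,
      smul_eq_mul, thetaVec]
    rw [Finset.sum_add_distrib]
    have hc : ∑ x : Fin (n+1), W p (Sum.inl x) * h (Sum.inr (Sum.inr (a,x)))
        = ∑ x : Fin (n+1), h (Sum.inr (Sum.inr (a,x))) * W p (Sum.inl x) :=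
      Finset.sum_congr rfl (fun x _ => mul_comm _ _)
    rw [hc]
    ring
  rw [heq] at h3
  exact h3.congr_fderiv rfl

end setting

section master

variable {n m : ℕ}

/-- Row functionals of the matrix appearing in `thetaWedge`. -/
def thRow (n m : ℕ) (a : Fin m) (μ : Fin (n+1)) (q : Jet1 n m) :
    Fin (n+1) → Jet1 n m → ℝ :=
  Fin.cons (thetaVec n m a q) (fun k v => v (Sum.inl (μ.succAbove k)))

lemma thetaWedge_eq (a : Fin m) (μ : Fin (n+1)) (q : Jet1 n m) (vs : Fin (n+1) → Jet1 n m) :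
    thetaWedge n m a μ q vs
      = (-1 : ℝ) ^ (μ : ℕ) * Matrix.det (Matrix.of fun r j => thRow n m a μ q r (vs j)) := rfl

lemma volForm_eq (vs : Fin (n+1) → Jet1 n m) :
    volForm n m vs = Matrix.det (Matrix.of fun r j => vs j (Sum.inl r)) := rfl

/-- Coefficients `∂L/∂y^a_μ`. -/
noncomputable def cL (n m : ℕ) (L : Jet1 n m → ℝ) (a : Fin m) (μ : Fin (n+1))
    (q : Jet1 n m) : ℝ :=
  fderiv ℝ L q (Pi.single (Sum.inr (Sum.inr (a, μ))) 1)

/-- The contact part of the Poincaré–Cartan form. -/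
noncomputable def contactForm (n m : ℕ) (L : Jet1 n m → ℝ) (q : Jet1 n m)
    (vs : Fin (n+1) → Jet1 n m) : ℝ :=
  ∑ a : Fin m, ∑ μ : Fin (n+1), cL n m L a μ q * thetaWedge n m a μ q vs

lemma pcForm_split (L : Jet1 n m → ℝ) (q : Jet1 n m) (vs : Fin (n+1) → Jet1 n m) :
    pcForm n m L q vs = contactForm n m L q vs + lagForm n m L q vs := rfl

lemma cL_differentiable (L : Jet1 n m → ℝ) (hL : ContDiff ℝ (⊤ : ℕ∞) L) (a : Fin m)
    (μ : Fin (n+1)) : Differentiable ℝ (cL n m L a μ) := by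
  have h1 : ContDiff ℝ (⊤ : ℕ∞) (fderiv ℝ L) := hL.fderiv_right (by simp)
  exact (h1.differentiable (by simp)).clm_apply (differentiable_const _)

/-- Row derivatives for the `thetaWedge` matrix along the field `W` in slot 0. -/
noncomputable def thRowD (n m : ℕ) (a : Fin m) (μ : Fin (n+1)) (p v0 : Jet1 n m)
    (W' : Jet1 n m →L[ℝ] Jet1 n m) (c : Fin n → Jet1 n m) :
    Fin (n+1) → (Jet1 n m →L[ℝ] (Fin (n+1) → ℝ)) :=
  Fin.cons
    (ContinuousLinearMap.pi (Fin.cons (dTheta n m a v0 + (thetaCLM n m a p).comp W')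
      (fun k => dTheta n m a (c k))))
    (fun r => ContinuousLinearMap.pi (Fin.cons ((prj n m (Sum.inl (μ.succAbove r))).comp W')
      (fun _ => 0)))

/-- Row derivatives for the volume matrix along the field `W` in slot 0. -/
noncomputable def volRowD (n m : ℕ) (W' : Jet1 n m →L[ℝ] Jet1 n m) :
    Fin (n+1) → (Jet1 n m →L[ℝ] (Fin (n+1) → ℝ)) :=
  fun r => ContinuousLinearMap.pi (Fin.cons ((prj n m (Sum.inl r)).comp W') (fun _ => 0))

lemma hasFDerivAt_thetaWedge_cons (a : Fin m) (μ : Fin (n+1)) (p : Jet1 n m)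
    (W : Jet1 n m → Jet1 n m) (W' : Jet1 n m →L[ℝ] Jet1 n m) (hW : HasFDerivAt W W' p)
    (c : Fin n → Jet1 n m) :
    HasFDerivAt (fun q => thetaWedge n m a μ q (Fin.cons (W q) c))
      ((-1:ℝ)^(μ:ℕ) • detDeriv (fun r j => thRow n m a μ p r ((Fin.cons (W p) c : Fin (n+1) → Jet1 n m) j))
        (thRowD n m a μ p (W p) W' c)) p := by
  have hrows : ∀ r, HasFDerivAt
      (fun q => (fun j => thRow n m a μ q r ((Fin.cons (W q) c : Fin (n+1) → Jet1 n m) j)))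
      (thRowD n m a μ p (W p) W' c r) p := by
    intro r
    refine Fin.cases ?_ (fun r => ?_) r
    · simp only [thRow, thRowD, Fin.cons_zero]
      apply hasFDerivAt_pi.2
      intro j
      refine Fin.cases ?_ (fun k => ?_) j
      · simp only [Fin.cons_zero]
        exact hasFDerivAt_thetaVec_comp a p W W' hW
      · simp only [Fin.cons_succ]
        exact hasFDerivAt_thetaVec a (c k) p
    · simp only [thRow, thRowD, Fin.cons_succ]
      apply hasFDerivAt_pi.2
      intro j
      refine Fin.cases ?_ (fun k => ?_) j
      · simp only [Fin.cons_zero]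
        exact (hasFDerivAt_prj (Sum.inl (μ.succAbove r)) (W p)).comp p hW
      · simp only [Fin.cons_succ]
        exact hasFDerivAt_const _ _
  have hdet := hasFDerivAt_det (fun q => fun r j => thRow n m a μ q r ((Fin.cons (W q) c : Fin (n+1) → Jet1 n m) j))
    (thRowD n m a μ p (W p) W' c) p hrows
  exact hdet.const_mul _

lemma hasFDerivAt_volForm_cons (p : Jet1 n m)
    (W : Jet1 n m → Jet1 n m) (W' : Jet1 n m →L[ℝ] Jet1 n m) (hW : HasFDerivAt W W' p)
    (c : Fin n → Jet1 n m) :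
    HasFDerivAt (fun q => volForm n m (Fin.cons (W q) c))
      (detDeriv (fun r j => ((Fin.cons (W p) c : Fin (n+1) → Jet1 n m) j) (Sum.inl r)) (volRowD n m W')) p := by
  have hrows : ∀ r, HasFDerivAt
      (fun q => (fun j => ((Fin.cons (W q) c : Fin (n+1) → Jet1 n m) j) (Sum.inl r)))
      (volRowD n m W' r) p := by
    intro r
    apply hasFDerivAt_pi.2
    intro j
    refine Fin.cases ?_ (fun k => ?_) j
    · simp only [Fin.cons_zero, volRowD]
      exact (hasFDerivAt_prj (Sum.inl r) (W p)).comp p hW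
    · simp only [Fin.cons_succ, volRowD]
      exact hasFDerivAt_const _ _
  exact hasFDerivAt_det (fun q => fun r j => ((Fin.cons (W q) c : Fin (n+1) → Jet1 n m) j) (Sum.inl r))
    (volRowD n m W') p hrows

/-- The derivative of `q ↦ Θ_L(q)(W q, c₁, …, c_n)`. -/
noncomputable def pcD (n m : ℕ) (L : Jet1 n m → ℝ) (p v0 : Jet1 n m)
    (W' : Jet1 n m →L[ℝ] Jet1 n m) (c : Fin n → Jet1 n m) : Jet1 n m →L[ℝ] ℝ :=
  (∑ a : Fin m, ∑ μ : Fin (n+1),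
    (cL n m L a μ p • ((-1:ℝ)^(μ:ℕ) •
        detDeriv (fun r j => thRow n m a μ p r ((Fin.cons v0 c : Fin (n+1) → Jet1 n m) j))
          (thRowD n m a μ p v0 W' c))
      + thetaWedge n m a μ p (Fin.cons v0 c) • fderiv ℝ (cL n m L a μ) p))
  + (L p • detDeriv (fun r j => ((Fin.cons v0 c : Fin (n+1) → Jet1 n m) j) (Sum.inl r)) (volRowD n m W')
      + volForm n m (Fin.cons v0 c) • fderiv ℝ L p)

theorem hasFDerivAt_pcForm_cons (L : Jet1 n m → ℝ) (hL : ContDiff ℝ (⊤ : ℕ∞) L) (p : Jet1 n m)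
    (W : Jet1 n m → Jet1 n m) (W' : Jet1 n m →L[ℝ] Jet1 n m) (hW : HasFDerivAt W W' p)
    (c : Fin n → Jet1 n m) :
    HasFDerivAt (fun q => pcForm n m L q (Fin.cons (W q) c))
      (pcD n m L p (W p) W' c) p := by
  have hsum : HasFDerivAt
      (fun q => ∑ a : Fin m, ∑ μ : Fin (n+1),
        cL n m L a μ q * thetaWedge n m a μ q (Fin.cons (W q) c))
      (∑ a : Fin m, ∑ μ : Fin (n+1),
        (cL n m L a μ p • ((-1:ℝ)^(μ:ℕ) •
            detDeriv (fun r j => thRow n m a μ p r ((Fin.cons (W p) c : Fin (n+1) → Jet1 n m) j))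
              (thRowD n m a μ p (W p) W' c))
          + thetaWedge n m a μ p (Fin.cons (W p) c) • fderiv ℝ (cL n m L a μ) p)) p := by
    refine HasFDerivAt.fun_sum fun a _ => HasFDerivAt.fun_sum fun μ _ => ?_
    exact ((cL_differentiable L hL a μ p).hasFDerivAt).mul
      (hasFDerivAt_thetaWedge_cons a μ p W W' hW c)
  have hlag : HasFDerivAt (fun q => L q * volForm n m (Fin.cons (W q) c))
      (L p • detDeriv (fun r j => ((Fin.cons (W p) c : Fin (n+1) → Jet1 n m) j) (Sum.inl r)) (volRowD n m W')
        + volForm n m (Fin.cons (W p) c) • fderiv ℝ L p) p :=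
    ((hL.differentiable (by simp) p).hasFDerivAt).mul (hasFDerivAt_volForm_cons p W W' hW c)
  exact hsum.add hlag

end master

section diff

variable {n m : ℕ}

lemma sum_updateRow_split {N : ℕ} (M : Matrix (Fin (N+1)) (Fin (N+1)) ℝ)
    (f g : Fin (N+1) → Fin (N+1) → ℝ) (t : Fin (N+1) → ℝ)
    (hfg : ∀ r, f r = g r + Pi.single 0 (t r)) :
    ∑ r, (M.updateRow r (f r)).det
      = ∑ r, (M.updateRow r (g r)).det + (M.updateCol 0 t).det := by
  rw [← sum_det_updateRow_single M t, ← Finset.sum_add_distrib]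
  refine Finset.sum_congr rfl fun r _ => ?_
  rw [hfg r, Matrix.det_updateRow_add]

lemma pcD_sub (L : Jet1 n m → ℝ) (p v0 : Jet1 n m)
    (W' : Jet1 n m →L[ℝ] Jet1 n m) (c : Fin n → Jet1 n m) (h : Jet1 n m) :
    pcD n m L p v0 W' c h
      = pcD n m L p v0 0 c h + pcForm n m L p (Fin.cons (W' h) c) := by
  have KTH : ∀ (a : Fin m) (μ : Fin (n+1)),
      detDeriv (fun r j => thRow n m a μ p r ((Fin.cons v0 c : Fin (n+1) → Jet1 n m) j))
        (thRowD n m a μ p v0 W' c) h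
      = detDeriv (fun r j => thRow n m a μ p r ((Fin.cons v0 c : Fin (n+1) → Jet1 n m) j))
          (thRowD n m a μ p v0 0 c) h
        + Matrix.det (Matrix.of fun r j =>
            thRow n m a μ p r ((Fin.cons (W' h) c : Fin (n+1) → Jet1 n m) j)) := by
    intro a μ
    rw [detDeriv_apply, detDeriv_apply]
    have hsplit := sum_updateRow_split
      (Matrix.of fun r j => thRow n m a μ p r ((Fin.cons v0 c : Fin (n+1) → Jet1 n m) j))
      (fun r => thRowD n m a μ p v0 W' c r h)
      (fun r => thRowD n m a μ p v0 0 c r h)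
      (fun r => thRow n m a μ p r (W' h)) ?_
    · rw [hsplit]
      congr 1
      have hcol : (Matrix.of fun r j =>
            thRow n m a μ p r ((Fin.cons v0 c : Fin (n+1) → Jet1 n m) j)).updateCol 0
              (fun r => thRow n m a μ p r (W' h))
          = Matrix.of fun r j =>
              thRow n m a μ p r ((Fin.cons (W' h) c : Fin (n+1) → Jet1 n m) j) := by
        ext r j
        refine Fin.cases ?_ (fun k => ?_) j
        · rw [Matrix.updateCol_self]
          simp
        · rw [Matrix.updateCol_ne (Fin.succ_ne_zero k)]
          simp
      rw [hcol]
    · intro r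
      funext j
      refine Fin.cases ?_ (fun r' => ?_) r
      · refine Fin.cases ?_ (fun k => ?_) j <;>
        · simp [thRowD, thRow, thetaCLM_apply, Pi.single_apply, Fin.succ_ne_zero, prj_apply]
      · refine Fin.cases ?_ (fun k => ?_) j <;>
        · simp [thRowD, thRow, Pi.single_apply, Fin.succ_ne_zero, prj_apply]
  have KV : detDeriv (fun r j => ((Fin.cons v0 c : Fin (n+1) → Jet1 n m) j) (Sum.inl r))
        (volRowD n m W') h
      = detDeriv (fun r j => ((Fin.cons v0 c : Fin (n+1) → Jet1 n m) j) (Sum.inl r))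
          (volRowD n m 0) h
        + Matrix.det (Matrix.of fun r j =>
            ((Fin.cons (W' h) c : Fin (n+1) → Jet1 n m) j) (Sum.inl r)) := by
    rw [detDeriv_apply, detDeriv_apply]
    have hsplit := sum_updateRow_split
      (Matrix.of fun r j => ((Fin.cons v0 c : Fin (n+1) → Jet1 n m) j) (Sum.inl r))
      (fun r => volRowD n m W' r h)
      (fun r => volRowD n m 0 r h)
      (fun r => W' h (Sum.inl r)) ?_
    · rw [hsplit]
      congr 1
      have hcol : (Matrix.of fun r j =>
            ((Fin.cons v0 c : Fin (n+1) → Jet1 n m) j) (Sum.inl r)).updateCol 0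
              (fun r => W' h (Sum.inl r))
          = Matrix.of fun r j =>
              ((Fin.cons (W' h) c : Fin (n+1) → Jet1 n m) j) (Sum.inl r) := by
        ext r j
        refine Fin.cases ?_ (fun k => ?_) j
        · rw [Matrix.updateCol_self]
          simp
        · rw [Matrix.updateCol_ne (Fin.succ_ne_zero k)]
          simp
      rw [hcol]
    · intro r
      funext j
      refine Fin.cases ?_ (fun k => ?_) j <;>
      · simp [volRowD, Pi.single_apply, Fin.succ_ne_zero, prj_apply]
  simp only [pcD, ContinuousLinearMap.add_apply, ContinuousLinearMap.sum_apply,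
    ContinuousLinearMap.smul_apply, smul_eq_mul]
  rw [show pcForm n m L p (Fin.cons (W' h) c)
      = (∑ a : Fin m, ∑ μ : Fin (n+1), cL n m L a μ p * ((-1:ℝ)^(μ:ℕ) *
          Matrix.det (Matrix.of fun r j =>
            thRow n m a μ p r ((Fin.cons (W' h) c : Fin (n+1) → Jet1 n m) j))))
        + L p * Matrix.det (Matrix.of fun r j =>
            ((Fin.cons (W' h) c : Fin (n+1) → Jet1 n m) j) (Sum.inl r)) from by
    simp only [pcForm, thetaWedge_eq, volForm_eq, cL]]
  simp only [KV]
  have hs : ∀ (a : Fin m) (μ : Fin (n+1)),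
      cL n m L a μ p * ((-1:ℝ)^(μ:ℕ) *
        detDeriv (fun r j => thRow n m a μ p r ((Fin.cons v0 c : Fin (n+1) → Jet1 n m) j))
          (thRowD n m a μ p v0 W' c) h)
      + thetaWedge n m a μ p (Fin.cons v0 c) * fderiv ℝ (cL n m L a μ) p h
      = (cL n m L a μ p * ((-1:ℝ)^(μ:ℕ) *
          detDeriv (fun r j => thRow n m a μ p r ((Fin.cons v0 c : Fin (n+1) → Jet1 n m) j))
            (thRowD n m a μ p v0 0 c) h)
        + thetaWedge n m a μ p (Fin.cons v0 c) * fderiv ℝ (cL n m L a μ) p h)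
      + cL n m L a μ p * ((-1:ℝ)^(μ:ℕ) *
          Matrix.det (Matrix.of fun r j =>
            thRow n m a μ p r ((Fin.cons (W' h) c : Fin (n+1) → Jet1 n m) j))) := by
    intro a μ
    rw [KTH a μ]
    ring
  simp only [hs]
  rw [Finset.sum_congr rfl (fun a _ => Finset.sum_add_distrib), Finset.sum_add_distrib]
  ring

end diff

section fixedvs

variable {n m : ℕ}

lemma pcForm_update (L : Jet1 n m → ℝ) (p : Jet1 n m) (ws : Fin (n+1) → Jet1 n m)
    (u : Jet1 n m) (i : Fin (n+1)) :
    pcForm n m L p (Function.update ws i u)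
      = (-1:ℝ)^(i:ℕ) * pcForm n m L p (Fin.cons u (fun k => ws (i.succAbove k))) := by
  have ht : ∀ (a : Fin m) (μ : Fin (n+1)),
      thetaWedge n m a μ p (Function.update ws i u)
        = (-1:ℝ)^(i:ℕ) * thetaWedge n m a μ p (Fin.cons u (fun k => ws (i.succAbove k))) := by
    intro a μ
    rw [thetaWedge_eq, thetaWedge_eq, det_update_cycle (thRow n m a μ p) ws u i]
    ring
  have hv : volForm n m (Function.update ws i u)
      = (-1:ℝ)^(i:ℕ) * volForm n m (Fin.cons u (fun k => ws (i.succAbove k))) := by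
    rw [volForm_eq, volForm_eq]
    exact det_update_cycle (fun r v => v (Sum.inl r)) ws u i
  show (∑ a : Fin m, ∑ μ : Fin (n+1),
      fderiv ℝ L p (Pi.single (Sum.inr (Sum.inr (a, μ))) 1) * thetaWedge n m a μ p _)
      + L p * volForm n m _ = _
  simp only [ht, hv, pcForm]
  rw [mul_add, Finset.mul_sum]
  congr 1
  · refine Finset.sum_congr rfl fun a _ => ?_
    rw [Finset.mul_sum]
    exact Finset.sum_congr rfl fun μ _ => by ring
  · ring

/-- Row derivatives for the `thetaWedge` matrix with fixed vectors. -/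
noncomputable def thRowD0 (n m : ℕ) (a : Fin m) (vs : Fin (n+1) → Jet1 n m) :
    Fin (n+1) → (Jet1 n m →L[ℝ] (Fin (n+1) → ℝ)) :=
  Fin.cons (ContinuousLinearMap.pi (fun j => dTheta n m a (vs j))) (fun _ => 0)

lemma hasFDerivAt_thetaWedge_fixed (a : Fin m) (μ : Fin (n+1)) (p : Jet1 n m)
    (vs : Fin (n+1) → Jet1 n m) :
    HasFDerivAt (fun q => thetaWedge n m a μ q vs)
      ((-1:ℝ)^(μ:ℕ) • detDeriv (fun r j => thRow n m a μ p r (vs j))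
        (thRowD0 n m a vs)) p := by
  have hrows : ∀ r, HasFDerivAt (fun q => (fun j => thRow n m a μ q r (vs j)))
      (thRowD0 n m a vs r) p := by
    intro r
    refine Fin.cases ?_ (fun r => ?_) r
    · simp only [thRow, thRowD0, Fin.cons_zero]
      exact hasFDerivAt_pi.2 fun j => hasFDerivAt_thetaVec a (vs j) p
    · simp only [thRow, thRowD0, Fin.cons_succ]
      exact hasFDerivAt_const _ _
  exact (hasFDerivAt_det (fun q => fun r j => thRow n m a μ q r (vs j))
    (thRowD0 n m a vs) p hrows).const_mul _

/-- Derivative of the contact part with fixed vectors. -/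
noncomputable def contactD (n m : ℕ) (L : Jet1 n m → ℝ) (p : Jet1 n m)
    (vs : Fin (n+1) → Jet1 n m) : Jet1 n m →L[ℝ] ℝ :=
  ∑ a : Fin m, ∑ μ : Fin (n+1),
    (cL n m L a μ p • ((-1:ℝ)^(μ:ℕ) • detDeriv (fun r j => thRow n m a μ p r (vs j))
        (thRowD0 n m a vs))
      + thetaWedge n m a μ p vs • fderiv ℝ (cL n m L a μ) p)

lemma hasFDerivAt_contact_fixed (L : Jet1 n m → ℝ) (hL : ContDiff ℝ (⊤ : ℕ∞) L) (p : Jet1 n m)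
    (vs : Fin (n+1) → Jet1 n m) :
    HasFDerivAt (fun q => contactForm n m L q vs) (contactD n m L p vs) p := by
  refine HasFDerivAt.fun_sum fun a _ => HasFDerivAt.fun_sum fun μ _ => ?_
  exact ((cL_differentiable L hL a μ p).hasFDerivAt).mul
    (hasFDerivAt_thetaWedge_fixed a μ p vs)

lemma hasFDerivAt_lag_fixed (L : Jet1 n m → ℝ) (hL : ContDiff ℝ (⊤ : ℕ∞) L) (p : Jet1 n m)
    (vs : Fin (n+1) → Jet1 n m) :
    HasFDerivAt (fun q => lagForm n m L q vs) (volForm n m vs • fderiv ℝ L p) p :=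
  ((hL.differentiable (by simp) p).hasFDerivAt).mul_const _

/-- The Lie derivative of the contact part vanishes on holonomic data. -/
lemma lie_contact_zero (L : Jet1 n m → ℝ) (p : Jet1 n m) (ws : Fin (n+1) → Jet1 n m)
    (Xp : Jet1 n m) (X' : Jet1 n m →L[ℝ] Jet1 n m)
    (hθ : ∀ (b : Fin m) (k : Fin (n+1)), thetaVec n m b p (ws k) = 0)
    (hstar : ∀ (a : Fin m) (k : Fin (n+1)), thetaVec n m a p (X' (ws k))
      = ∑ μ' : Fin (n+1), Xp (Sum.inr (Sum.inr (a, μ'))) * ws k (Sum.inl μ')) :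
    contactD n m L p ws Xp
      + ∑ k : Fin (n+1), contactForm n m L p (Function.update ws k (X' (ws k))) = 0 := by
  have hTW0 : ∀ (a : Fin m) (μ : Fin (n+1)), thetaWedge n m a μ p ws = 0 := by
    intro a μ
    rw [thetaWedge_eq]
    rw [Matrix.det_eq_zero_of_row_eq_zero 0 (fun j => by
      simp only [Matrix.of_apply, thRow, Fin.cons_zero]; exact hθ a j)]
    ring
  -- the bracket lemma
  have BR : ∀ (a : Fin m) (μ : Fin (n+1)),
      detDeriv (fun r j => thRow n m a μ p r (ws j)) (thRowD0 n m a ws) Xp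
        + ∑ k : Fin (n+1), Matrix.det (Matrix.of fun r j =>
            thRow n m a μ p r (Function.update ws k (X' (ws k)) j)) = 0 := by
    intro a μ
    set M : Matrix (Fin (n+1)) (Fin (n+1)) ℝ :=
      Matrix.of fun r j => thRow n m a μ p r (ws j) with hM
    have minor_eq : ∀ (k : Fin (n+1)) (B : Matrix (Fin (n+1)) (Fin (n+1)) ℝ),
        (∀ (r : Fin n) (j : Fin n), B (Fin.succ r) (k.succAbove j)
            = M (Fin.succ r) (k.succAbove j)) →
        (B.submatrix Fin.succ k.succAbove).det
          = (M.submatrix Fin.succ k.succAbove).det := by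
      intro k B hB
      congr 1
      ext r j
      rw [Matrix.submatrix_apply, Matrix.submatrix_apply, hB]
    -- first term
    have h1 : detDeriv (fun r j => thRow n m a μ p r (ws j)) (thRowD0 n m a ws) Xp
        = ∑ k : Fin (n+1), (-1:ℝ)^(k:ℕ) * (dTheta n m a (ws k) Xp)
            * (M.submatrix Fin.succ k.succAbove).det := by
      rw [detDeriv_apply]
      rw [Finset.sum_eq_single (0 : Fin (n+1))]
      · rw [Matrix.det_succ_row_zero]
        refine Finset.sum_congr rfl fun k _ => ?_
        rw [Matrix.updateRow_self]
        have hmin := minor_eq k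
          ((Matrix.of fun r j => thRow n m a μ p r (ws j)).updateRow 0
            (thRowD0 n m a ws 0 Xp))
          (fun r j => by rw [Matrix.updateRow_ne (Fin.succ_ne_zero r)])
        rw [hmin]
        simp [thRowD0, ContinuousLinearMap.pi_apply]
      · intro r _ hr
        obtain ⟨r', rfl⟩ := Fin.exists_succ_eq.2 hr
        refine Matrix.det_eq_zero_of_row_eq_zero (Fin.succ r') (fun j => ?_)
        rw [Matrix.updateRow_self]
        simp [thRowD0, Fin.cons_succ]
      · intro h; exact absurd (Finset.mem_univ _) h
    -- second
    have h2 : ∀ k : Fin (n+1), Matrix.det (Matrix.of fun r j =>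
          thRow n m a μ p r (Function.update ws k (X' (ws k)) j))
        = (-1:ℝ)^(k:ℕ) * thetaVec n m a p (X' (ws k))
            * (M.submatrix Fin.succ k.succAbove).det := by
      intro k
      rw [Matrix.det_succ_row_zero]
      rw [Finset.sum_eq_single k]
      · have hmin := minor_eq k
          (Matrix.of fun r j => thRow n m a μ p r (Function.update ws k (X' (ws k)) j))
          (fun r j => by
            simp only [Matrix.of_apply, hM]
            rw [Function.update_of_ne (Fin.succAbove_ne k j)])
        rw [hmin]
        simp only [Matrix.of_apply, thRow, Fin.cons_zero, Function.update_self]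
      · intro j _ hj
        have hz : (Matrix.of fun r j => thRow n m a μ p r
            (Function.update ws k (X' (ws k)) j)) 0 j = 0 := by
          simp only [Matrix.of_apply, thRow, Fin.cons_zero]
          rw [Function.update_of_ne hj]
          exact hθ a j
        rw [hz]
        ring
      · intro h; exact absurd (Finset.mem_univ _) h
    rw [h1]
    rw [Finset.sum_congr rfl (fun k _ => h2 k), ← Finset.sum_add_distrib]
    refine Finset.sum_eq_zero fun k _ => ?_
    rw [hstar a k, dTheta_apply]
    ring
  simp only [contactD, ContinuousLinearMap.sum_apply, ContinuousLinearMap.add_apply,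
    ContinuousLinearMap.smul_apply, smul_eq_mul, hTW0, zero_mul, add_zero]
  simp only [contactForm, thetaWedge_eq]
  have hswap : ∑ k : Fin (n+1), ∑ a : Fin m, ∑ μ : Fin (n+1),
      cL n m L a μ p * ((-1:ℝ)^(μ:ℕ) * Matrix.det (Matrix.of fun r j =>
        thRow n m a μ p r (Function.update ws k (X' (ws k)) j)))
      = ∑ a : Fin m, ∑ μ : Fin (n+1), ∑ k : Fin (n+1),
        cL n m L a μ p * ((-1:ℝ)^(μ:ℕ) * Matrix.det (Matrix.of fun r j =>
          thRow n m a μ p r (Function.update ws k (X' (ws k)) j))) := by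
    rw [Finset.sum_comm]
    exact Finset.sum_congr rfl fun a _ => Finset.sum_comm
  rw [hswap, ← Finset.sum_add_distrib]
  refine Finset.sum_eq_zero fun a _ => ?_
  rw [← Finset.sum_add_distrib]
  refine Finset.sum_eq_zero fun μ _ => ?_
  have hmul : ∑ k : Fin (n+1),
      cL n m L a μ p * ((-1:ℝ)^(μ:ℕ) * Matrix.det (Matrix.of fun r j =>
        thRow n m a μ p r (Function.update ws k (X' (ws k)) j)))
      = cL n m L a μ p * ((-1:ℝ)^(μ:ℕ) * ∑ k : Fin (n+1),
          Matrix.det (Matrix.of fun r j =>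
            thRow n m a μ p r (Function.update ws k (X' (ws k)) j))) := by
    rw [Finset.mul_sum, Finset.mul_sum]
  rw [hmul, ← mul_add, ← mul_add, BR a μ, mul_zero, mul_zero]

end fixedvs

section geometry

variable {n m : ℕ}

lemma totalDY_differentiable (g : YC n m → ℝ) (hg : ContDiff ℝ (⊤ : ℕ∞) g) (ν : Fin (n+1)) :
    Differentiable ℝ (fun q : Jet1 n m => totalDY n m ν g q) := by
  have hfd : Differentiable ℝ (fun q : Jet1 n m => fderiv ℝ g (pr10 n m q)) := by
    have h1 : Differentiable ℝ (fderiv ℝ g) := (hg.fderiv_right (m := (⊤ : ℕ∞)) (by simp)).differentiable (by simp)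
    have h2 : Differentiable ℝ (pr10 n m) := by
      rw [pr10_eq_clm]; exact (pr10L n m).differentiable
    exact h1.comp h2
  have h3 : Differentiable ℝ (fun q : Jet1 n m =>
      fderiv ℝ g (pr10 n m q) (Pi.single (Sum.inl ν) 1)
        + ∑ b : Fin m, q (Sum.inr (Sum.inr (b, ν))) *
            fderiv ℝ g (pr10 n m q) (Pi.single (Sum.inr b) 1)) := by
    refine Differentiable.add ?_ ?_
    · exact hfd.clm_apply (differentiable_const _)
    · refine Differentiable.fun_sum fun b _ => ?_
      exact ((prj n m (Sum.inr (Sum.inr (b, ν)))).differentiable).mul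
        (hfd.clm_apply (differentiable_const _))
  exact h3

/-- Componentwise derivative of the prolonged vector field. -/
noncomputable def Xc' (n m : ℕ) (ξtY : YC n m → YC n m) (p : Jet1 n m) :
    Idx n m → (Jet1 n m →L[ℝ] ℝ) :=
  Sum.elim
    (fun μ => (fderiv ℝ (fun y => ξtY y (Sum.inl μ)) (pr10 n m p)).comp (pr10L n m))
    (Sum.elim
      (fun a => (fderiv ℝ (fun y => ξtY y (Sum.inr a)) (pr10 n m p)).comp (pr10L n m))
      (fun aν => fderiv ℝ (fun q => prolongY n m ξtY q (Sum.inr (Sum.inr aν))) p))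

noncomputable def XD (n m : ℕ) (ξtY : YC n m → YC n m) (p : Jet1 n m) :
    Jet1 n m →L[ℝ] Jet1 n m :=
  ContinuousLinearMap.pi (Xc' n m ξtY p)

lemma hasFDerivAt_prolongY (ξtY : YC n m → YC n m) (hst : ContDiff ℝ (⊤ : ℕ∞) ξtY) (p : Jet1 n m) :
    HasFDerivAt (prolongY n m ξtY) (XD n m ξtY p) p := by
  apply hasFDerivAt_pi.2
  intro i
  rcases i with μ | b | aν
  · have hy : DifferentiableAt ℝ (fun y => ξtY y (Sum.inl μ)) (pr10 n m p) :=
      ((contDiff_pi.mp hst (Sum.inl μ)).differentiable (by simp)) _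
    exact (hy.hasFDerivAt).comp p (hasFDerivAt_pr10 p)
  · have hy : DifferentiableAt ℝ (fun y => ξtY y (Sum.inr b)) (pr10 n m p) :=
      ((contDiff_pi.mp hst (Sum.inr b)).differentiable (by simp)) _
    exact (hy.hasFDerivAt).comp p (hasFDerivAt_pr10 p)
  · refine DifferentiableAt.hasFDerivAt ?_
    have h1 := totalDY_differentiable (fun y => ξtY y (Sum.inr aν.1))
      (contDiff_pi.mp hst (Sum.inr aν.1)) aν.2
    have h2 : Differentiable ℝ (fun q : Jet1 n m =>
        totalDY n m aν.2 (fun y => ξtY y (Sum.inr aν.1)) q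
          - ∑ μ : Fin (n+1), q (Sum.inr (Sum.inr (aν.1, μ))) *
              totalDY n m aν.2 (fun y => ξtY y (Sum.inl μ)) q) := by
      refine h1.sub (Differentiable.fun_sum fun μ _ => ?_)
      exact ((prj n m (Sum.inr (Sum.inr (aν.1, μ)))).differentiable).mul
        (totalDY_differentiable (fun y => ξtY y (Sum.inl μ))
          (contDiff_pi.mp hst (Sum.inl μ)) aν.2)
    exact h2.differentiableAt

lemma fderiv_pr10_eval (g : YC n m → ℝ) (p w : Jet1 n m)
    (hw : ∀ b : Fin m, w (Sum.inr (Sum.inl b))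
      = ∑ ν : Fin (n+1), p (Sum.inr (Sum.inr (b, ν))) * w (Sum.inl ν)) :
    fderiv ℝ g (pr10 n m p) (pr10L n m w)
      = ∑ ν : Fin (n+1), w (Sum.inl ν) * totalDY n m ν g p := by
  rw [clm_eval_sum (fderiv ℝ g (pr10 n m p)) (pr10L n m w), Fintype.sum_sum_type]
  have hl : ∀ ν : Fin (n+1), pr10L n m w (Sum.inl ν) = w (Sum.inl ν) := fun _ => rfl
  have hr : ∀ b : Fin m, pr10L n m w (Sum.inr b) = w (Sum.inr (Sum.inl b)) := fun _ => rfl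
  simp only [hl, hr, hw]
  have expand : ∑ ν : Fin (n+1), w (Sum.inl ν) * totalDY n m ν g p
      = ∑ ν : Fin (n+1), w (Sum.inl ν)
            * fderiv ℝ g (pr10 n m p) (Pi.single (Sum.inl ν) 1)
        + ∑ ν : Fin (n+1), ∑ b : Fin m,
            (p (Sum.inr (Sum.inr (b, ν))) * w (Sum.inl ν))
              * fderiv ℝ g (pr10 n m p) (Pi.single (Sum.inr b) 1) := by
    rw [← Finset.sum_add_distrib]
    refine Finset.sum_congr rfl fun ν _ => ?_
    simp only [totalDY]
    rw [mul_add, Finset.mul_sum]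
    congr 1
    exact Finset.sum_congr rfl fun b _ => by ring
  rw [expand]
  congr 1
  rw [Finset.sum_comm]
  exact Finset.sum_congr rfl fun b _ => by rw [Finset.sum_mul]

/-- The key symmetry identity `(★)`:  `θ^a(DX(w)) = Σ_μ' X(p)^a_{μ'} w^{μ'}` on
semi-holonomic vectors. -/
lemma star_eq (ξtY : YC n m → YC n m) (p w : Jet1 n m)
    (hw : ∀ b : Fin m, w (Sum.inr (Sum.inl b))
      = ∑ ν : Fin (n+1), p (Sum.inr (Sum.inr (b, ν))) * w (Sum.inl ν)) (a : Fin m) :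
    thetaVec n m a p (XD n m ξtY p w)
      = ∑ μ' : Fin (n+1), prolongY n m ξtY p (Sum.inr (Sum.inr (a, μ'))) * w (Sum.inl μ') := by
  have hXa : XD n m ξtY p w (Sum.inr (Sum.inl a))
      = fderiv ℝ (fun y => ξtY y (Sum.inr a)) (pr10 n m p) (pr10L n m w) := rfl
  have hB : ∀ μ : Fin (n+1), XD n m ξtY p w (Sum.inl μ)
      = ∑ ν : Fin (n+1), w (Sum.inl ν) * totalDY n m ν (fun y => ξtY y (Sum.inl μ)) p := by
    intro μ
    have : XD n m ξtY p w (Sum.inl μ)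
        = fderiv ℝ (fun y => ξtY y (Sum.inl μ)) (pr10 n m p) (pr10L n m w) := rfl
    rw [this, fderiv_pr10_eval _ p w hw]
  have hP : ∀ μ' : Fin (n+1), prolongY n m ξtY p (Sum.inr (Sum.inr (a, μ')))
      = totalDY n m μ' (fun y => ξtY y (Sum.inr a)) p
        - ∑ μ : Fin (n+1), p (Sum.inr (Sum.inr (a, μ)))
            * totalDY n m μ' (fun y => ξtY y (Sum.inl μ)) p := fun _ => rfl
  show XD n m ξtY p w (Sum.inr (Sum.inl a))
      - ∑ μ : Fin (n+1), p (Sum.inr (Sum.inr (a, μ))) * XD n m ξtY p w (Sum.inl μ) = _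
  rw [hXa, fderiv_pr10_eval _ p w hw]
  simp only [hB, hP]
  simp only [sub_mul, Finset.sum_sub_distrib]
  congr 1
  · exact Finset.sum_congr rfl fun ν _ => mul_comm _ _
  · simp only [Finset.mul_sum, Finset.sum_mul]
    rw [Finset.sum_comm]
    exact Finset.sum_congr rfl fun μ _ => Finset.sum_congr rfl fun ν _ => by ring

lemma jetProlong_comp_diffAt (φ : Base n → Fin m → ℝ) (hφ : ContDiff ℝ (⊤ : ℕ∞) φ) (x : Base n) :
    ∀ i : Idx n m, DifferentiableAt ℝ (fun x' => jetProlong n m φ x' i) x := by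
  intro i
  rcases i with μ | b | aν
  · exact ((ContinuousLinearMap.proj μ : Base n →L[ℝ] ℝ).differentiable).differentiableAt
  · exact ((contDiff_pi.mp hφ b).differentiable (by simp)).differentiableAt
  · exact ((((contDiff_pi.mp hφ aν.1).fderiv_right (m := (⊤ : ℕ∞)) (by simp)).differentiable (by simp)).clm_apply
      (differentiable_const _)).differentiableAt

lemma jet_fderiv (φ : Base n → Fin m → ℝ) (hφ : ContDiff ℝ (⊤ : ℕ∞) φ) (x : Base n) :
    fderiv ℝ (jetProlong n m φ) x
      = ContinuousLinearMap.pi (fun i => fderiv ℝ (fun x' => jetProlong n m φ x' i) x) :=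
  (hasFDerivAt_pi.2 fun i => (jetProlong_comp_diffAt φ hφ x i).hasFDerivAt).fderiv

lemma jet_w_inl (φ : Base n → Fin m → ℝ) (hφ : ContDiff ℝ (⊤ : ℕ∞) φ) (x : Base n)
    (v : Base n) (μ : Fin (n+1)) :
    fderiv ℝ (jetProlong n m φ) x v (Sum.inl μ) = v μ := by
  rw [jet_fderiv φ hφ x]
  show fderiv ℝ (fun x' => jetProlong n m φ x' (Sum.inl μ)) x v = v μ
  have h1 : (fun x' : Base n => jetProlong n m φ x' (Sum.inl μ))
      = (ContinuousLinearMap.proj μ : Base n →L[ℝ] ℝ) := rfl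
  rw [h1, ContinuousLinearMap.fderiv]
  rfl

lemma jet_w_theta (φ : Base n → Fin m → ℝ) (hφ : ContDiff ℝ (⊤ : ℕ∞) φ) (x : Base n)
    (v : Base n) (b : Fin m) :
    fderiv ℝ (jetProlong n m φ) x v (Sum.inr (Sum.inl b))
      = ∑ ν : Fin (n+1), jetProlong n m φ x (Sum.inr (Sum.inr (b, ν)))
          * fderiv ℝ (jetProlong n m φ) x v (Sum.inl ν) := by
  have h1 : fderiv ℝ (jetProlong n m φ) x v (Sum.inr (Sum.inl b))
      = fderiv ℝ (fun x' => φ x' b) x v := by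
    rw [jet_fderiv φ hφ x]
    rfl
  rw [h1, clm_eval_sum (fderiv ℝ (fun x' => φ x' b) x) v]
  refine Finset.sum_congr rfl fun ν _ => ?_
  rw [jet_w_inl φ hφ x v ν]
  have h2 : jetProlong n m φ x (Sum.inr (Sum.inr (b, ν)))
      = fderiv ℝ (fun x' => φ x' b) x (Pi.single ν 1) := rfl
  rw [h2]
  ring

lemma jet_thetaVec_zero (φ : Base n → Fin m → ℝ) (hφ : ContDiff ℝ (⊤ : ℕ∞) φ) (x : Base n)
    (v : Base n) (b : Fin m) :
    thetaVec n m b (jetProlong n m φ x) (fderiv ℝ (jetProlong n m φ) x v) = 0 := by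
  show fderiv ℝ (jetProlong n m φ) x v (Sum.inr (Sum.inl b))
      - ∑ ν : Fin (n+1), jetProlong n m φ x (Sum.inr (Sum.inr (b, ν)))
          * fderiv ℝ (jetProlong n m φ) x v (Sum.inl ν) = 0
  rw [jet_w_theta φ hφ x v b, sub_self]

end geometry

/-- **The nonholonomic momentum equation.**
Let `(L, 𝒞, F)` be a nonholonomic field theory, `ξ̄` a nonholonomic symmetry with
`π`-projectable associated vector field `ξ̃_Y`, and `φ` a solution of the nonholonomic
field equations `(j¹φ)*(W ⌟ Ω_L) = 0` for all admissible `W`, whose prolongation takes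
values in `𝒞`.  Then
`(j¹φ)*(d J^{n.h.}_{ξ̄}) = (j¹φ)*(𝓛_{j¹ξ̃_Y}(L·η))`. -/
theorem nonholonomic_momentum_equation (n m d : ℕ)
    (L : Jet1 n m → ℝ) (hL : ContDiff ℝ (⊤ : ℕ∞) L)
    (act : (Fin d → ℝ) → YC n m → YC n m)
    (ξbar : YC n m → Fin d → ℝ)
    (ξtY : YC n m → YC n m) (hξt : ∀ y, ξtY y = act (ξbar y) y)
    (hst : ContDiff ℝ (⊤ : ℕ∞) ξtY)
    (hproj : ∃ ξX : Base n → Base n, ∀ (y : YC n m) (μ : Fin (n + 1)),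
      ξtY y (Sum.inl μ) = ξX (fun ν => y (Sum.inl ν)) μ)
    (C : Set (Jet1 n m))
    (F : Set (Jet1 n m → (Fin (n + 1) → Jet1 n m) → ℝ))
    (hsb : ∀ Φ ∈ F, ∀ (p : Jet1 n m) (u v : Jet1 n m) (vs : Fin n → Jet1 n m),
      (∀ μ, v (Sum.inl μ) = 0) → (∀ a, v (Sum.inr (Sum.inl a)) = 0) →
        Φ p (Fin.cons (u + v) vs) = Φ p (Fin.cons u vs))
    (hsym : ∀ (γ : Jet1 n m), γ ∈ C → ∀ Φ ∈ F, ∀ vs : Fin n → Jet1 n m,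
      Φ γ (Fin.cons (prolongY n m (fun y' => act (ξbar (pr10 n m γ)) y') γ) vs) = 0)
    (φ : Base n → Fin m → ℝ) (hφ : ContDiff ℝ (⊤ : ℕ∞) φ)
    (hC : ∀ x, jetProlong n m φ x ∈ C)
    (hsol : ∀ W : Jet1 n m → Jet1 n m,
      (∀ Φ ∈ F, ∀ (x : Base n) (vs : Fin n → Base n),
        Φ (jetProlong n m φ x)
          (Fin.cons (W (jetProlong n m φ x))
            (fun k => fderiv ℝ (jetProlong n m φ) x (vs k))) = 0) →
      ∀ (x : Base n) (vs : Fin (n + 1) → Base n),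
        pcOmega n m L (jetProlong n m φ x)
          (Fin.cons (W (jetProlong n m φ x))
            (fun k => fderiv ℝ (jetProlong n m φ) x (vs k))) = 0) :
    ∀ (x : Base n) (vs : Fin (n + 1) → Base n),
      dform n m n (momentumMap n m L ξtY) (jetProlong n m φ x)
          (fun k => fderiv ℝ (jetProlong n m φ) x (vs k))
        = lieForm n m (prolongY n m ξtY) (lagForm n m L) (jetProlong n m φ x)
            (fun k => fderiv ℝ (jetProlong n m φ) x (vs k)) := by
  intro x vs
  set p : Jet1 n m := jetProlong n m φ x with hp
  set ws : Fin (n+1) → Jet1 n m := fun k => fderiv ℝ (jetProlong n m φ) x (vs k) with hws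
  set X : Jet1 n m → Jet1 n m := prolongY n m ξtY with hXdef
  have hXd : HasFDerivAt X (XD n m ξtY p) p := hasFDerivAt_prolongY ξtY hst p
  set X' : Jet1 n m →L[ℝ] Jet1 n m := XD n m ξtY p with hX'def
  have hfderivX : fderiv ℝ X p = X' := hXd.fderiv
  -- Part A: the prolonged symmetry field is admissible, hence Ω_L vanishes on it
  have hadm : ∀ Φ ∈ F, ∀ (x' : Base n) (vs' : Fin n → Base n),
      Φ (jetProlong n m φ x') (Fin.cons (X (jetProlong n m φ x'))
        (fun k => fderiv ℝ (jetProlong n m φ) x' (vs' k))) = 0 := by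
    intro Φ hΦ x' vs'
    set γ : Jet1 n m := jetProlong n m φ x' with hγ
    set yb : YC n m := pr10 n m γ with hyb
    set u : Jet1 n m := prolongY n m (fun y' => act (ξbar yb) y') γ with hu
    have h1 : ∀ μ, (X γ - u) (Sum.inl μ) = 0 := by
      intro μ
      have e1 : (X γ - u) (Sum.inl μ)
          = ξtY yb (Sum.inl μ) - act (ξbar yb) yb (Sum.inl μ) := rfl
      rw [e1, hξt yb, sub_self]
    have h2 : ∀ a, (X γ - u) (Sum.inr (Sum.inl a)) = 0 := by
      intro a
      have e1 : (X γ - u) (Sum.inr (Sum.inl a))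
          = ξtY yb (Sum.inr a) - act (ξbar yb) yb (Sum.inr a) := rfl
      rw [e1, hξt yb, sub_self]
    have h3 := hsb Φ hΦ γ u (X γ - u)
      (fun k => fderiv ℝ (jetProlong n m φ) x' (vs' k)) h1 h2
    have h4 : u + (X γ - u) = X γ := by abel
    rw [h4] at h3
    rw [h3]
    exact hsym γ (hC x') Φ hΦ _
  have hOmega : pcOmega n m L p (Fin.cons (X p) ws) = 0 := hsol X hadm x vs
  have hA : dform n m (n+1) (pcForm n m L) p (Fin.cons (X p) ws) = 0 := by
    have h := hOmega
    simp only [pcOmega, neg_eq_zero] at h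
    exact h
  -- derivative computations
  have hgi : ∀ i : Fin (n+1),
      fderiv ℝ (fun q => momentumMap n m L ξtY q (fun j => ws (i.succAbove j))) p
        = pcD n m L p (X p) X' (fun j => ws (i.succAbove j)) := by
    intro i
    have h := hasFDerivAt_pcForm_cons L hL p X X' hXd (fun j => ws (i.succAbove j))
    exact HasFDerivAt.fderiv (by exact h)
  have hfrozen : ∀ i : Fin (n+1),
      fderiv ℝ (fun q => pcForm n m L q (Fin.cons (X p) (fun j => ws (i.succAbove j)))) p
        = pcD n m L p (X p) 0 (fun j => ws (i.succAbove j)) := by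
    intro i
    have h := hasFDerivAt_pcForm_cons L hL p (fun _ => X p) 0
      (hasFDerivAt_const (X p) p) (fun j => ws (i.succAbove j))
    exact HasFDerivAt.fderiv (by exact h)
  have hfix : fderiv ℝ (fun q => pcForm n m L q ws) p
      = contactD n m L p ws + volForm n m ws • fderiv ℝ L p := by
    have h := (hasFDerivAt_contact_fixed L hL p ws).add (hasFDerivAt_lag_fixed L hL p ws)
    exact HasFDerivAt.fderiv (by exact h)
  -- expansion of the (n+2)-term exterior derivative
  have hAexp : dform n m (n+1) (pcForm n m L) p (Fin.cons (X p) ws)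
      = fderiv ℝ (fun q => pcForm n m L q ws) p (X p)
        + ∑ i : Fin (n+1), (-1:ℝ)^((i:ℕ)+1)
            * pcD n m L p (X p) 0 (fun j => ws (i.succAbove j)) (ws i) := by
    show ∑ i : Fin (n+2), (-1:ℝ)^(i:ℕ) * fderiv ℝ (fun q => pcForm n m L q
        (fun j => (Fin.cons (X p) ws : Fin (n+2) → Jet1 n m) (i.succAbove j))) p
        ((Fin.cons (X p) ws : Fin (n+2) → Jet1 n m) i) = _
    rw [Fin.sum_univ_succ]
    congr 1
    · have harr0 : (fun j : Fin (n+1) => (Fin.cons (X p) ws : Fin (n+2) → Jet1 n m)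
          ((0 : Fin (n+2)).succAbove j)) = ws := by
        funext j
        rw [Fin.succAbove_zero]
        exact Fin.cons_succ _ _ _
      rw [harr0]
      simp
    · refine Finset.sum_congr rfl fun i _ => ?_
      have harr : (fun j : Fin (n+1) => (Fin.cons (X p) ws : Fin (n+2) → Jet1 n m)
          ((Fin.succ i).succAbove j)) = Fin.cons (X p) (fun j => ws (i.succAbove j)) := by
        funext j
        refine Fin.cases ?_ (fun k => ?_) j
        · rw [Fin.succ_succAbove_zero, Fin.cons_zero, Fin.cons_zero]
        · rw [Fin.succ_succAbove_succ, Fin.cons_succ, Fin.cons_succ]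
      rw [harr, hfrozen i, Fin.cons_succ, Fin.val_succ]
  have hA2 : fderiv ℝ (fun q => pcForm n m L q ws) p (X p)
      = ∑ i : Fin (n+1), (-1:ℝ)^(i:ℕ)
          * pcD n m L p (X p) 0 (fun j => ws (i.succAbove j)) (ws i) := by
    have h := hA
    rw [hAexp] at h
    have h2 : ∑ i : Fin (n+1), (-1:ℝ)^((i:ℕ)+1)
        * pcD n m L p (X p) 0 (fun j => ws (i.succAbove j)) (ws i)
        = - ∑ i : Fin (n+1), (-1:ℝ)^(i:ℕ)
          * pcD n m L p (X p) 0 (fun j => ws (i.succAbove j)) (ws i) := by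
      rw [← Finset.sum_neg_distrib]
      exact Finset.sum_congr rfl fun i _ => by ring
    rw [h2] at h
    linarith
  -- cyclic permutation
  have hcyc : ∀ (i : Fin (n+1)) (u : Jet1 n m),
      (-1:ℝ)^(i:ℕ) * pcForm n m L p (Fin.cons u (fun j => ws (i.succAbove j)))
        = pcForm n m L p (Function.update ws i u) := by
    intro i u
    rw [pcForm_update L p ws u i]
  -- holonomy and the symmetry identity
  have hθ0 : ∀ (b : Fin m) (k : Fin (n+1)), thetaVec n m b p (ws k) = 0 :=
    fun b k => jet_thetaVec_zero φ hφ x (vs k) b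
  have hstar : ∀ (a : Fin m) (k : Fin (n+1)), thetaVec n m a p (X' (ws k))
      = ∑ μ' : Fin (n+1), X p (Sum.inr (Sum.inr (a, μ'))) * ws k (Sum.inl μ') :=
    fun a k => star_eq ξtY p (ws k) (fun b => jet_w_theta φ hφ x (vs k) b) a
  have hC0 := lie_contact_zero L p ws (X p) X' hθ0 hstar
  -- final computation
  calc dform n m n (momentumMap n m L ξtY) p ws
      = ∑ i : Fin (n+1), (-1:ℝ)^(i:ℕ) * fderiv ℝ
          (fun q => momentumMap n m L ξtY q (fun j => ws (i.succAbove j))) p (ws i) := rfl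
    _ = ∑ i : Fin (n+1), (-1:ℝ)^(i:ℕ)
          * pcD n m L p (X p) X' (fun j => ws (i.succAbove j)) (ws i) :=
        Finset.sum_congr rfl fun i _ => by rw [hgi i]
    _ = (∑ i : Fin (n+1), (-1:ℝ)^(i:ℕ)
          * pcD n m L p (X p) 0 (fun j => ws (i.succAbove j)) (ws i))
        + ∑ i : Fin (n+1), pcForm n m L p (Function.update ws i (X' (ws i))) := by
        rw [← Finset.sum_add_distrib]
        refine Finset.sum_congr rfl fun i _ => ?_
        rw [pcD_sub L p (X p) X' (fun j => ws (i.succAbove j)) (ws i), mul_add,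
          hcyc i (X' (ws i))]
    _ = fderiv ℝ (fun q => pcForm n m L q ws) p (X p)
        + ∑ i : Fin (n+1), pcForm n m L p (Function.update ws i (X' (ws i))) := by
        rw [hA2]
    _ = (contactD n m L p ws (X p)
          + ∑ i : Fin (n+1), contactForm n m L p (Function.update ws i (X' (ws i))))
        + ((volForm n m ws • fderiv ℝ L p) (X p)
          + ∑ i : Fin (n+1), lagForm n m L p (Function.update ws i (X' (ws i)))) := by
        rw [hfix]
        simp only [ContinuousLinearMap.add_apply]
        rw [show (∑ i : Fin (n+1), pcForm n m L p (Function.update ws i (X' (ws i))))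
            = ∑ i : Fin (n+1), (contactForm n m L p (Function.update ws i (X' (ws i)))
              + lagForm n m L p (Function.update ws i (X' (ws i)))) from
          Finset.sum_congr rfl fun i _ => rfl]
        rw [Finset.sum_add_distrib]
        ring
    _ = (volForm n m ws • fderiv ℝ L p) (X p)
        + ∑ i : Fin (n+1), lagForm n m L p (Function.update ws i (X' (ws i))) := by
        rw [hC0, zero_add]
    _ = lieForm n m X (lagForm n m L) p ws := by
        show _ = fderiv ℝ (fun q => lagForm n m L q ws) p (X p)
          + ∑ k : Fin (n+1), lagForm n m L p (Function.update ws k (fderiv ℝ X p (ws k)))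
        rw [hfderivX, HasFDerivAt.fderiv (hasFDerivAt_lag_fixed L hL p ws)]
end
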